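/- Under the standing assumptions, let c be a codeword of C_{n−1}(n,q) with wt(c) ≤ W(n,q). If |P_c^∞| ≤ |ℍ_c^∞| − 2, then c is not a minimal codeword. -/

import Mathlib

open Module

noncomputable section

/-- `pgTheta q m = 1 + q + … + q^m` for `m ≥ 0`, and `0` for `m < 0`. -/
def pgTheta (q : ℕ) (m : ℤ) : ℤ := ∑ i ∈ Finset.range (m + 1).toNat, (q : ℤ) ^ i

/-- `q^j`, truncated to `0` for negative exponents `j`. -/
def pgQpow (q : ℕ) (j : ℤ) : ℤ := if j < 0 then 0 else (q : ℤ) ^ j.toNat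

/-- `Δ_{i,q}` where `q = p^h`: `⌊√q / 2^(i-2)⌋` if `h > 2`, and `⌊p / 2^i⌋` if `h = 2`. -/
noncomputable def pgDelta (p h : ℕ) (i : ℤ) : ℤ :=
  if 2 < h then ⌊Real.sqrt ((p : ℝ) ^ h) / (2 : ℝ) ^ (i - 2)⌋
  else ⌊(p : ℝ) / (2 : ℝ) ^ i⌋

/-- `W(i,q) = (Δ_{i,q} - 1)·θ_{i-1}`. -/
noncomputable def pgW (p h : ℕ) (i : ℤ) : ℤ := (pgDelta p h i - 1) * pgTheta (p ^ h) (i - 1)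

/-- `U(n,i,q) = q^i − (Δ_{n,q} − 2)·⌊q^(i−1)⌋ − (i−2)·((q−1)·Δ_{n,q} + 1)·⌊q^(i−3)⌋ + θ_{i−3}`. -/
noncomputable def pgU (p h n : ℕ) (i : ℤ) : ℤ :=
  pgQpow (p ^ h) i - (pgDelta p h n - 2) * pgQpow (p ^ h) (i - 1)
    - (i - 2) * ((((p ^ h : ℕ) : ℤ) - 1) * pgDelta p h n + 1) * pgQpow (p ^ h) (i - 3)
    + pgTheta (p ^ h) (i - 3)

/-- `⌈w / θ_m⌉` as a natural number. -/
noncomputable def pgCeil (q w : ℕ) (m : ℤ) : ℕ := (⌈(w : ℚ) / ((pgTheta q m : ℤ) : ℚ)⌉).toNat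
open scoped Classical

/-- A point of `PG(n,q)`: a 1-dimensional subspace of `F^(n+1)`. -/
abbrev PGPoint (F : Type) [Field F] (n : ℕ) :=
  {P : Submodule F (Fin (n + 1) → F) // finrank F P = 1}

/-- The indicator function of a subspace `κ`, with values in `ZMod p`. -/
noncomputable def pgInd (p : ℕ) (F : Type) [Field F] (n : ℕ)
    (κ : Submodule F (Fin (n + 1) → F)) : PGPoint F n → ZMod p :=
  fun P => if P.1 ≤ κ then 1 else 0

/-- The code `C_{n-1}(n,q)`: the `ZMod p`-span of the indicator functions of all
hyperplanes (i.e. `n`-dimensional subspaces of `F^(n+1)`). -/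
noncomputable def pgCode (p : ℕ) (F : Type) [Field F] (n : ℕ) :
    Submodule (ZMod p) (PGPoint F n → ZMod p) :=
  Submodule.span (ZMod p)
    {f | ∃ H : Submodule F (Fin (n + 1) → F), finrank F H = n ∧ f = pgInd p F n H}

/-- The weight of a codeword: the number of points where it is nonzero. -/
noncomputable def pgWt (p : ℕ) (F : Type) [Field F] (n : ℕ)
    (c : PGPoint F n → ZMod p) : ℕ :=
  Set.ncard {P : PGPoint F n | c P ≠ 0}

/-- The number of points of `supp c` lying in the subspace `κ`. -/
noncomputable def pgSecant (p : ℕ) (F : Type) [Field F] (n : ℕ)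
    (c : PGPoint F n → ZMod p) (κ : Submodule F (Fin (n + 1) → F)) : ℕ :=
  Set.ncard {P : PGPoint F n | c P ≠ 0 ∧ P.1 ≤ κ}

/-- A codeword `c` is minimal if every codeword whose support is contained in the
support of `c` is a scalar multiple of `c`. -/
noncomputable def pgMinimal (p : ℕ) (F : Type) [Field F] (n : ℕ)
    (c : PGPoint F n → ZMod p) : Prop :=
  ∀ c' ∈ pgCode p F n, {P : PGPoint F n | c' P ≠ 0} ⊆ {P : PGPoint F n | c P ≠ 0} →
    ∃ α : ZMod p, c' = α • c

/-- The restriction `c restricted to 𝓗 = Σ_{H ∈ 𝓗} α(H)·f_H` of a codeword to a set of hyperplanes,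
given the coefficient function `α`. -/
noncomputable def pgRes (p : ℕ) (F : Type) [Field F] (n : ℕ)
    (α : Submodule F (Fin (n + 1) → F) → ZMod p)
    (A : Finset (Submodule F (Fin (n + 1) → F))) : PGPoint F n → ZMod p :=
  fun P => ∑ H ∈ A, α H * pgInd p F n H P

/-- The graph `Γ_ℙ` associated with a partition `ℙ` of the hyperplane set of `c`:
two distinct parts are adjacent iff some hole of `c` is in the support of the
restrictions of `c` to both parts and of no other part. -/
noncomputable def pgGraph (p : ℕ) (F : Type) [Field F] (n : ℕ)
    (c : PGPoint F n → ZMod p)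
    (α : Submodule F (Fin (n + 1) → F) → ZMod p)
    (P : Finset (Finset (Submodule F (Fin (n + 1) → F)))) :
    SimpleGraph (Finset (Submodule F (Fin (n + 1) → F))) where
  Adj A B := A ∈ P ∧ B ∈ P ∧ A ≠ B ∧ ∃ Q : PGPoint F n,
    c Q = 0 ∧ pgRes p F n α A Q ≠ 0 ∧ pgRes p F n α B Q ≠ 0 ∧
    ∀ C ∈ P, C ≠ A → C ≠ B → pgRes p F n α C Q = 0
  symm := by
    constructor
    rintro A B ⟨hA, hB, hne, Q, h0, h1, h2, h3⟩
    exact ⟨hB, hA, hne.symm, Q, h0, h2, h1, fun C hC hCB hCA => h3 C hC hCA hCB⟩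
  loopless := by
    constructor
    rintro A ⟨-, -, hne, -⟩
    exact hne rfl

/-- One coarsening step: replace a partition by the partition whose parts are the
unions of the parts lying in a common connected component of `Γ_ℙ`. -/
noncomputable def pgNext (p : ℕ) (F : Type) [Field F] (n : ℕ)
    (c : PGPoint F n → ZMod p)
    (α : Submodule F (Fin (n + 1) → F) → ZMod p)
    (P : Finset (Finset (Submodule F (Fin (n + 1) → F)))) :
    Finset (Finset (Submodule F (Fin (n + 1) → F))) :=
  P.image (fun A => (P.filter (fun B => (pgGraph p F n c α P).Reachable A B)).sup id)

/-- The sequence of partitions `ℙ^0, ℙ^1, ℙ^2, …`, starting from the partition of the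
hyperplane set `S` into singletons; it stabilizes at the partition `ℍ_c^∞`. -/
noncomputable def pgSeq (p : ℕ) (F : Type) [Field F] (n : ℕ)
    (c : PGPoint F n → ZMod p)
    (α : Submodule F (Fin (n + 1) → F) → ZMod p)
    (S : Finset (Submodule F (Fin (n + 1) → F))) :
    ℕ → Finset (Finset (Submodule F (Fin (n + 1) → F)))
  | 0 => S.image (fun H => {H})
  | (i + 1) => pgNext p F n c α (pgSeq p F n c α S i)

/-- `P_c^∞`: the set of holes of `c` at which the restriction of `c` to some part of
the stabilized partition is nonzero. -/
noncomputable def pgPinf (p : ℕ) (F : Type) [Field F] (n : ℕ)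
    (c : PGPoint F n → ZMod p)
    (α : Submodule F (Fin (n + 1) → F) → ZMod p)
    (Hinf : Finset (Finset (Submodule F (Fin (n + 1) → F)))) : Set (PGPoint F n) :=
  {Q | c Q = 0 ∧ ∃ A ∈ Hinf, pgRes p F n α A Q ≠ 0}

/-!
Write `ℙ` for the partition `ℍ_c^∞` and `Z` for `P_c^∞`. Requiring `Σ_{𝓗 ∈ ℙ} λ_𝓗 c|_𝓗` to vanish
on `Z` imposes `|Z| ≤ |ℙ| - 2` linear conditions on `λ ∈ 𝔽_p^ℙ`, so some non-constant `λ` satisfies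
them, and `d := Σ λ_𝓗 c|_𝓗` is a codeword vanishing at every zero of `c`. It is not a multiple of
`c`: as `|H_c| ≤ Δ_{n,q} - 1 < q`, each hyperplane `H₀ ∈ H_c` contains a point on no other hyperplane
of `H_c`, and there `d = λ_𝓗 · c` for the part `𝓗 ∋ H₀`.
-/

section Partition

variable {α : Type*}

def DisjointPartsOf (S : Finset α) (P : Finset (Finset α)) : Prop :=
  (∀ A ∈ P, A.Nonempty ∧ A ⊆ S) ∧ (P : Set (Finset α)).PairwiseDisjoint id

theorem DisjointPartsOf.image_sup_filter {S : Finset α} {P : Finset (Finset α)}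
    (hP : DisjointPartsOf S P) {r : Finset α → Finset α → Prop} (hr : Equivalence r) :
    DisjointPartsOf S (P.image fun A => (P.filter (r A)).sup id) := by
  have self_mem : ∀ A ∈ P, A ∈ P.filter (r A) := fun A hA =>
    Finset.mem_filter.mpr ⟨hA, hr.refl A⟩
  refine ⟨?_, ?_⟩
  · simp only [Finset.mem_image]
    rintro _ ⟨A, hA, rfl⟩
    refine ⟨(hP.1 A hA).1.mono (Finset.le_sup (f := id) (self_mem A hA)), ?_⟩
    exact Finset.sup_le fun B hB => (hP.1 B (Finset.mem_filter.mp hB).1).2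
  · simp only [Finset.coe_image]
    rintro _ ⟨A, hA, rfl⟩ _ ⟨A', hA', rfl⟩ hne
    refine Finset.disjoint_sup_left.mpr fun B hB => Finset.disjoint_sup_right.mpr fun B' hB' => ?_
    obtain ⟨hBP, hAB⟩ := Finset.mem_filter.mp hB
    obtain ⟨hB'P, hAB'⟩ := Finset.mem_filter.mp hB'
    by_cases hBB' : B = B'
    · subst hBB'
      have hAA' : r A A' := hr.trans hAB (hr.symm hAB')
      have hclass : P.filter (r A) = P.filter (r A') :=
        Finset.filter_congr fun C _ => ⟨hr.trans (hr.symm hAA'), hr.trans hAA'⟩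
      exact absurd (congrArg (Finset.sup · id) hclass) hne
    · exact hP.2 hBP hB'P hBB'

end Partition

theorem exists_sum_smul_eq_zero_forall_exists_ne {K ι V : Type*} [Field K] [Fintype ι]
    [AddCommGroup V] [Module K V] [FiniteDimensional K V] (v : ι → V)
    (h : finrank K V + 2 ≤ Fintype.card ι) :
    ∃ μ : ι → K, ∑ i, μ i • v i = 0 ∧ ∀ a : K, ∃ i, μ i ≠ a := by
  set Φ := Fintype.linearCombination K v
  have hker : 2 ≤ finrank K (LinearMap.ker Φ) := by
    have rank_nullity := LinearMap.finrank_range_add_finrank_ker Φ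
    have := Submodule.finrank_le (LinearMap.range Φ)
    rw [finrank_fintype_fun_eq_card] at rank_nullity
    omega
  have hconst : finrank K (K ∙ (fun _ => 1 : ι → K)) ≤ 1 :=
    (finrank_span_le_card _).trans (by simp)
  obtain ⟨μ, hμ, hμc⟩ : ∃ μ ∈ LinearMap.ker Φ, μ ∉ K ∙ (fun _ => 1 : ι → K) := by
    by_contra! hle
    have := Submodule.finrank_mono (show LinearMap.ker Φ ≤ K ∙ (fun _ => 1 : ι → K) from hle)
    omega
  refine ⟨μ, by simpa [Φ, Fintype.linearCombination_apply] using hμ, fun a => ?_⟩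
  by_contra! hμa
  exact hμc (Submodule.mem_span_singleton.mpr ⟨a, funext fun i => by simp [hμa i]⟩)

theorem Submodule.exists_mem_forall_notMem_of_card_lt {K M : Type*} [Field K]
    [AddCommGroup M] [Module K M] (W : Submodule K M) (T : Finset (Submodule K M))
    (hT : ∀ U ∈ T, ¬ W ≤ U) (hcard : T.card < ENat.card K) :
    ∃ x ∈ W, ∀ U ∈ T, x ∉ U := by
  have := Submodule.iUnion_ssubset_of_forall_ne_top_of_card_lt (ι := T) Finset.univ
    (fun U => U.1.comap W.subtype)
    (fun U => by rw [Ne, Submodule.comap_subtype_eq_top]; exact hT U.1 U.2) (by simpa using hcard)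
  obtain ⟨x, -, hx⟩ := Set.exists_of_ssubset this
  simp only [Finset.mem_univ, Set.iUnion_true, Set.mem_iUnion, SetLike.mem_coe,
    Submodule.mem_comap, Submodule.subtype_apply, not_exists, Subtype.forall] at hx
  exact ⟨x, x.2, hx⟩

section ProjectiveCode

variable {p : ℕ} {F : Type} [Field F] {n : ℕ}

theorem disjointPartsOf_pgSeq (c : PGPoint F n → ZMod p)
    (α : Submodule F (Fin (n + 1) → F) → ZMod p) (S : Finset (Submodule F (Fin (n + 1) → F)))
    (j : ℕ) : DisjointPartsOf S (pgSeq p F n c α S j) := by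
  induction j with
  | zero =>
    refine ⟨?_, ?_⟩
    · simp only [pgSeq, Finset.mem_image]
      rintro _ ⟨H, hH, rfl⟩
      exact ⟨Finset.singleton_nonempty H, Finset.singleton_subset_iff.mpr hH⟩
    · simp only [pgSeq, Finset.coe_image]
      rintro _ ⟨H, -, rfl⟩ _ ⟨H', -, rfl⟩ hne
      exact Finset.disjoint_singleton.mpr fun h => hne (h ▸ rfl)
  | succ j ih => exact ih.image_sup_filter (SimpleGraph.reachable_is_equivalence _)

theorem pgRes_mem_pgCode {α : Submodule F (Fin (n + 1) → F) → ZMod p}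
    {A : Finset (Submodule F (Fin (n + 1) → F))} (hA : ∀ H ∈ A, finrank F H = n) :
    pgRes p F n α A ∈ pgCode p F n := by
  have : pgRes p F n α A = ∑ H ∈ A, α H • pgInd p F n H := by
    funext P
    simp [pgRes, Finset.sum_apply]
  rw [this]
  exact Submodule.sum_mem _ fun H hH => Submodule.smul_mem _ _
    (Submodule.subset_span ⟨H, hA H hH, rfl⟩)

theorem pgRes_apply_eq_ite {α : Submodule F (Fin (n + 1) → F) → ZMod p}
    {A : Finset (Submodule F (Fin (n + 1) → F))} {P₀ : PGPoint F n}
    {H₀ : Submodule F (Fin (n + 1) → F)} (h : ∀ H ∈ A, P₀.1 ≤ H ↔ H = H₀) :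
    pgRes p F n α A P₀ = if H₀ ∈ A then α H₀ else 0 := by
  rw [pgRes, Finset.sum_congr rfl fun H hH => by rw [pgInd, if_congr (h H hH) rfl rfl]]
  simp only [mul_ite, mul_one, mul_zero, Finset.sum_ite_eq']

theorem exists_pgPoint_le_iff_eq [Fintype F] (hn : n ≠ 0)
    {S : Finset (Submodule F (Fin (n + 1) → F))} (hS : ∀ H ∈ S, finrank F H = n)
    (hcard : S.card < Fintype.card F) {H₀ : Submodule F (Fin (n + 1) → F)} (hH₀ : H₀ ∈ S) :
    ∃ P₀ : PGPoint F n, ∀ H ∈ S, P₀.1 ≤ H ↔ H = H₀ := by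
  -- `⊥` joins the family to be avoided so that the vector found is nonzero.
  have hnot_le : ∀ U ∈ insert ⊥ (S.erase H₀), ¬ H₀ ≤ U := by
    simp only [Finset.mem_insert, Finset.mem_erase]
    rintro U (rfl | ⟨hne, hU⟩) hle
    · exact hn (by rw [← hS H₀ hH₀, le_bot_iff.mp hle, finrank_bot])
    · exact hne (Submodule.eq_of_le_of_finrank_eq hle (by rw [hS H₀ hH₀, hS U hU])).symm
  have hcard' : (insert ⊥ (S.erase H₀)).card < ENat.card F := by
    have := Finset.card_insert_le (⊥ : Submodule F (Fin (n + 1) → F)) (S.erase H₀)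
    have := Finset.card_erase_lt_of_mem hH₀
    rw [ENat.card_eq_coe_fintype_card, Nat.cast_lt]
    omega
  obtain ⟨v, hvH₀, hv⟩ := Submodule.exists_mem_forall_notMem_of_card_lt H₀ _ hnot_le hcard'
  have hv0 : v ≠ 0 := fun h => hv ⊥ (Finset.mem_insert_self _ _) (h ▸ Submodule.zero_mem _)
  refine ⟨⟨F ∙ v, finrank_span_singleton hv0⟩, fun H hH => ?_⟩
  rw [Submodule.span_singleton_le_iff_mem]
  refine ⟨fun hvH => by_contra fun hne => hv H ?_ hvH, fun h => h ▸ hvH₀⟩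
  exact Finset.mem_insert_of_mem (Finset.mem_erase.mpr ⟨hne, hH⟩)

theorem not_pgMinimal_of_ncard_pgPinf_add_two_le [Fact p.Prime] [Fintype F]
    {S : Finset (Submodule F (Fin (n + 1) → F))} (hS : ∀ H ∈ S, finrank F H = n)
    {α : Submodule F (Fin (n + 1) → F) → ZMod p} (hα : ∀ H ∈ S, α H ≠ 0)
    {c : PGPoint F n → ZMod p} (hc : c = pgRes p F n α S)
    (hsep : ∀ H₀ ∈ S, ∃ P₀ : PGPoint F n, ∀ H ∈ S, P₀.1 ≤ H ↔ H = H₀)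
    {Hinf : Finset (Finset (Submodule F (Fin (n + 1) → F)))} (hparts : DisjointPartsOf S Hinf)
    (hsmall : (pgPinf p F n c α Hinf).ncard + 2 ≤ Hinf.card) :
    ¬ pgMinimal p F n c := by
  intro hmin
  set Z := pgPinf p F n c α Hinf
  obtain ⟨μ, hμ, hμc⟩ := exists_sum_smul_eq_zero_forall_exists_ne (K := ZMod p) (ι := Hinf)
    (fun A (Q : Z) => pgRes p F n α A.1 Q)
    (by rwa [finrank_fintype_fun_eq_card, Fintype.card_coe, ← Nat.card_eq_fintype_card,
      Nat.card_coe_set_eq])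
  set d := ∑ A : Hinf, μ A • pgRes p F n α A.1
  have hd_mem : d ∈ pgCode p F n := Submodule.sum_mem _ fun A _ => Submodule.smul_mem _ _
    (pgRes_mem_pgCode fun H hH => hS H ((hparts.1 A A.2).2 hH))
  have hd_supp : {P | d P ≠ 0} ⊆ {P | c P ≠ 0} := by
    intro Q hdQ hcQ
    apply hdQ
    by_cases hQ : Q ∈ Z
    · simpa [d] using congrFun hμ ⟨Q, hQ⟩
    · have : ∀ A ∈ Hinf, pgRes p F n α A Q = 0 := fun A hA =>
        by_contra fun h => hQ ⟨hcQ, A, hA, h⟩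
      simp [d, this]
  obtain ⟨a, hda⟩ := hmin d hd_mem hd_supp
  obtain ⟨A₀, hA₀⟩ := hμc a
  obtain ⟨H₀, hH₀⟩ := (hparts.1 _ A₀.2).1
  have hH₀S := (hparts.1 _ A₀.2).2 hH₀
  obtain ⟨P₀, hP₀⟩ := hsep H₀ hH₀S
  have hres : ∀ A : Hinf, pgRes p F n α A P₀ = if H₀ ∈ A.1 then α H₀ else 0 := fun A =>
    pgRes_apply_eq_ite fun H hH => hP₀ H ((hparts.1 _ A.2).2 hH)
  have hcP₀ : c P₀ = α H₀ := by rw [hc, pgRes_apply_eq_ite hP₀, if_pos hH₀S]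
  have hdP₀ : d P₀ = μ A₀ * α H₀ := by
    simp only [d, Finset.sum_apply, Pi.smul_apply, smul_eq_mul, hres]
    rw [Fintype.sum_eq_single A₀ fun A hA => ?_, if_pos hH₀]
    rw [if_neg fun hH₀A => ?_, mul_zero]
    exact Finset.disjoint_left.mp (hparts.2 A₀.2 A.2 (Subtype.coe_ne_coe.mpr hA).symm) hH₀ hH₀A
  have hdaP₀ := congrFun hda P₀
  rw [hdP₀, Pi.smul_apply, smul_eq_mul, hcP₀] at hdaP₀
  exact hA₀ (mul_right_cancel₀ (hα H₀ hH₀S) hdaP₀)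

end ProjectiveCode

theorem pgTheta_pos (q : ℕ) {m : ℤ} (hm : 0 ≤ m) : 0 < pgTheta q m :=
  Finset.sum_pos' (fun i _ => by positivity) ⟨0, by simp; omega, by simp⟩

theorem pgCeil_le_of_le_mul {q w : ℕ} {m k : ℤ} (hm : 0 ≤ m)
    (hw : (w : ℤ) ≤ k * pgTheta q m) : (pgCeil q w m : ℤ) ≤ k := by
  have hθ := pgTheta_pos q hm
  have hceil : ⌈(w : ℚ) / (pgTheta q m : ℚ)⌉ ≤ k := by
    rw [Int.ceil_le, div_le_iff₀ (by exact_mod_cast hθ)]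
    exact_mod_cast hw
  have hk : 0 ≤ k := nonneg_of_mul_nonneg_left ((Int.natCast_nonneg w).trans hw) hθ
  rw [pgCeil]
  omega

theorem pgDelta_le_pow {p h : ℕ} (hp : 0 < p) (hh : h ≠ 0) {n : ℕ} (hn : 2 ≤ n) :
    pgDelta p h n ≤ (p ^ h : ℕ) := by
  rw [← Int.floor_natCast (R := ℝ) (p ^ h), pgDelta]
  split_ifs
  · refine Int.floor_le_floor (div_le_self (Real.sqrt_nonneg _) ?_ |>.trans ?_)
    · exact one_le_zpow₀ (by norm_num) (by omega)
    · have : (1 : ℝ) ≤ (p : ℝ) ^ h := one_le_pow₀ (by exact_mod_cast hp)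
      rw [Real.sqrt_le_left (by positivity)]
      push_cast
      nlinarith
  · refine Int.floor_le_floor (div_le_self (Nat.cast_nonneg p) ?_ |>.trans ?_)
    · exact one_le_zpow₀ (by norm_num) (by omega)
    · exact_mod_cast Nat.le_self_pow hh p

theorem statement_11_general (p h n : ℕ) (hp : p.Prime) (hh : 2 ≤ h) (hn : 2 ≤ n)
    (F : Type) [Field F] [Fintype F] (hF : Fintype.card F = p ^ h)
    (c : PGPoint F n → ZMod p)
    (hwt : (pgWt p F n c : ℤ) ≤ pgW p h n)
    (S : Finset (Submodule F (Fin (n + 1) → F)))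
    (hScard : S.card = pgCeil (p ^ h) (pgWt p F n c) ((n : ℤ) - 1))
    (hShyp : ∀ H ∈ S, finrank F H = n)
    (α : Submodule F (Fin (n + 1) → F) → ZMod p)
    (hα : ∀ H ∈ S, α H ≠ 0)
    (hrep : c = fun P => ∑ H ∈ S, α H * pgInd p F n H P)
    (j : ℕ)
    (hsmall : (pgPinf p F n c α (pgSeq p F n c α S j)).ncard + 2 ≤
      (pgSeq p F n c α S j).card) :
    ¬ pgMinimal p F n c := by
  have := Fact.mk hp
  have hScard_lt : S.card < Fintype.card F := by
    have hceil := pgCeil_le_of_le_mul (by omega) hwt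
    have hΔ := pgDelta_le_pow hp.pos (by omega : h ≠ 0) hn
    rw [← hScard] at hceil
    rw [hF]
    omega
  exact not_pgMinimal_of_ncard_pgPinf_add_two_le hShyp hα hrep
    (fun _ hH₀ => exists_pgPoint_le_iff_eq (by omega) hShyp hScard_lt hH₀)
    (disjointPartsOf_pgSeq c α S j) hsmall

/-- Theorem: if `|P_c^∞| ≤ |ℍ_c^∞| − 2`, then `c` is not a minimal codeword. -/
theorem statement_11 (p h n : ℕ) (hp : p.Prime) (hh : 2 ≤ h) (hn : 2 ≤ n)
    (hq27 : 27 < p ^ h)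
    (hq1 : 2 < h → max 32 (2 ^ (2 * n - 4)) ≤ p ^ h)
    (hq2 : h = 2 → 2 ^ (2 * n) ≤ p ^ h)
    (F : Type) [Field F] [Fintype F] (hF : Fintype.card F = p ^ h)
    (c : PGPoint F n → ZMod p) (hc : c ∈ pgCode p F n)
    (hwt : (pgWt p F n c : ℤ) ≤ pgW p h n)
    (S : Finset (Submodule F (Fin (n + 1) → F)))
    (hScard : S.card = pgCeil (p ^ h) (pgWt p F n c) ((n : ℤ) - 1))
    (hShyp : ∀ H ∈ S, finrank F H = n)
    (α : Submodule F (Fin (n + 1) → F) → ZMod p)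
    (hα : ∀ H ∈ S, α H ≠ 0)
    (hrep : c = fun P => ∑ H ∈ S, α H * pgInd p F n H P)
    (j : ℕ)
    (hstab : pgSeq p F n c α S (j + 1) = pgSeq p F n c α S j)
    (hsmall : (pgPinf p F n c α (pgSeq p F n c α S j)).ncard + 2 ≤
      (pgSeq p F n c α S j).card) :
    ¬ pgMinimal p F n c :=
  statement_11_general p h n hp hh hn F hF c hwt S hScard hShyp α hα hrep j hsmall
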